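/- arXiv:1503.05263 — 7 statements merged into one kernel-verified Lean document; each statement's English description precedes it below -/
import Mathlib

section
/- For every positive integer D, h(D) = ν₂(D) + 2σ(D) − τ(D). -/
open Finset

/-- `h D` counts quadruples `(a,b,c,d)` of nonnegative integers with
`b + c < D`, `a > c`, `d > b`, and `a*d = D + b*c`. -/
noncomputable def orphanCount (D : ℕ) : ℕ :=
  Set.ncard {q : ℕ × ℕ × ℕ × ℕ |
    q.2.1 + q.2.2.1 < D ∧ q.1 > q.2.2.1 ∧ q.2.2.2 > q.2.1 ∧
    q.1 * q.2.2.2 = D + q.2.1 * q.2.2.1}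

/-- `nuTwo D` is the number of partitions of `D` using exactly two distinct part sizes. -/
def nuTwo (D : ℕ) : ℕ :=
  Finset.card (Finset.univ.filter (fun p : Nat.Partition D => p.parts.toFinset.card = 2))

namespace OrphanProof

/-- bound -/
def M (D : ℕ) : ℕ := D + D*D + 1

def P (D : ℕ) (q : ℕ × ℕ × ℕ × ℕ) : Prop :=
  q.2.1 + q.2.2.1 < D ∧ q.1 > q.2.2.1 ∧ q.2.2.2 > q.2.1 ∧
    q.1 * q.2.2.2 = D + q.2.1 * q.2.2.1

instance (D : ℕ) : DecidablePred (P D) := fun q => by unfold P; infer_instance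

def F (D : ℕ) : Finset (ℕ × ℕ × ℕ × ℕ) :=
  (range (M D) ×ˢ range D ×ˢ range D ×ˢ range (M D)).filter (P D)

lemma mem_F {D : ℕ} {q : ℕ × ℕ × ℕ × ℕ} : q ∈ F D ↔ P D q := by
  obtain ⟨a, b, c, d⟩ := q
  simp only [F, mem_filter, mem_product, mem_range, and_iff_right_iff_imp]
  rintro ⟨h1, h2, h3, h4⟩
  simp only [P] at h1 h2 h3 h4 ⊢
  have hb : b < D := by omega
  have hc : c < D := by omega
  have hbc : b * c ≤ D * D :=
    Nat.mul_le_mul (le_of_lt hb) (le_of_lt hc)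
  have ha1 : 1 ≤ a := by omega
  have hd1 : 1 ≤ d := by omega
  have ha : a ≤ a * d := Nat.le_mul_of_pos_right a hd1
  have hd : d ≤ a * d := Nat.le_mul_of_pos_left d ha1
  have hM : M D = D + D*D + 1 := rfl
  refine ⟨by omega, hb, hc, by omega⟩

lemma orphanCount_eq_card_F (D : ℕ) : orphanCount D = (F D).card := by
  have : {q : ℕ × ℕ × ℕ × ℕ |
      q.2.1 + q.2.2.1 < D ∧ q.1 > q.2.2.1 ∧ q.2.2.2 > q.2.1 ∧
      q.1 * q.2.2.2 = D + q.2.1 * q.2.2.1} = ↑(F D) := by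
    ext q
    simp only [Set.mem_setOf_eq, Finset.coe_filter, mem_coe, mem_F, P]
  rw [orphanCount, this, Set.ncard_coe_finset]

/-- The four pieces. -/
def F1 (D : ℕ) : Finset (ℕ × ℕ × ℕ × ℕ) := (F D).filter (fun q => q.2.1 = 0 ∧ q.2.2.1 = 0)
def F2 (D : ℕ) : Finset (ℕ × ℕ × ℕ × ℕ) := (F D).filter (fun q => q.2.1 = 0 ∧ q.2.2.1 ≠ 0)
def F3 (D : ℕ) : Finset (ℕ × ℕ × ℕ × ℕ) := (F D).filter (fun q => q.2.1 ≠ 0 ∧ q.2.2.1 = 0)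
def F4 (D : ℕ) : Finset (ℕ × ℕ × ℕ × ℕ) := (F D).filter (fun q => q.2.1 ≠ 0 ∧ q.2.2.1 ≠ 0)

lemma card_F_split (D : ℕ) :
    (F D).card = (F1 D).card + (F2 D).card + (F3 D).card + (F4 D).card := by
  have h1 := Finset.card_filter_add_card_filter_not
    (s := F D) (p := fun q => q.2.1 = 0)
  have h2 := Finset.card_filter_add_card_filter_not
    (s := (F D).filter (fun q => q.2.1 = 0)) (p := fun q => q.2.2.1 = 0)
  have h3 := Finset.card_filter_add_card_filter_not
    (s := (F D).filter (fun q => ¬ q.2.1 = 0)) (p := fun q => q.2.2.1 = 0)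
  rw [Finset.filter_filter, Finset.filter_filter] at h2 h3
  have e1 : F1 D = (F D).filter (fun q => q.2.1 = 0 ∧ q.2.2.1 = 0) := rfl
  have e2 : F2 D = (F D).filter (fun q => q.2.1 = 0 ∧ ¬ q.2.2.1 = 0) := rfl
  have e3 : F3 D = (F D).filter (fun q => ¬ q.2.1 = 0 ∧ q.2.2.1 = 0) := rfl
  have e4 : F4 D = (F D).filter (fun q => ¬ q.2.1 = 0 ∧ ¬ q.2.2.1 = 0) := rfl
  rw [e1, e2, e3, e4]
  omega

lemma card_F1 (D : ℕ) (hD : 0 < D) : (F1 D).card = D.divisors.card := by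
  have : (F1 D).card = (D.divisorsAntidiagonal).card := by
    refine Finset.card_bij' (fun q _ => (q.1, q.2.2.2))
      (fun p _ => (p.1, 0, 0, p.2)) ?_ ?_ ?_ ?_
    · rintro ⟨a, b, c, d⟩ hq
      simp only [F1, mem_filter, mem_F, P] at hq
      obtain ⟨⟨h1, h2, h3, h4⟩, hb, hc⟩ := hq
      simp only [Nat.mem_divisorsAntidiagonal]
      subst hb; subst hc
      constructor
      · simpa using h4
      · omega
    · rintro ⟨a, d⟩ hp
      rw [Nat.mem_divisorsAntidiagonal] at hp
      have ha : 0 < a := by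
        rcases Nat.eq_zero_or_pos a with h | h
        · exfalso; rw [h] at hp; simp at hp; omega
        · exact h
      have hd : 0 < d := by
        rcases Nat.eq_zero_or_pos d with h | h
        · exfalso; rw [h] at hp; simp at hp; omega
        · exact h
      simp only [F1, mem_filter, mem_F, P]
      refine ⟨⟨by omega, by simpa using ha, by simpa using hd, by simpa using hp.1⟩,
        trivial, trivial⟩
    · rintro ⟨a, b, c, d⟩ hq
      simp only [F1, mem_filter] at hq
      obtain ⟨-, hb, hc⟩ := hq
      simp [hb, hc]
    · rintro ⟨a, d⟩ _; rfl
  rw [this]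
  simp only [Finset.card_eq_sum_ones]
  exact Nat.sum_divisorsAntidiagonal (fun _ _ => 1)

lemma card_F2 (D : ℕ) (hD : 0 < D) : (F2 D).card = ∑ d ∈ D.divisors, (d - 1) := by
  have key : (F2 D).card = ((D.divisorsAntidiagonal).sigma (fun p => Ioo 0 p.1)).card := by
    refine Finset.card_bij' (fun q _ => ⟨(q.1, q.2.2.2), q.2.2.1⟩)
      (fun p _ => (p.1.1, 0, p.2, p.1.2)) ?_ ?_ ?_ ?_
    · rintro ⟨a, b, c, d⟩ hq
      simp only [F2, mem_filter, mem_F, P] at hq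
      obtain ⟨⟨h1, h2, h3, h4⟩, hb, hc⟩ := hq
      subst hb
      simp only [Finset.mem_sigma, Nat.mem_divisorsAntidiagonal, Finset.mem_Ioo]
      refine ⟨⟨by simpa using h4, by omega⟩, by omega, h2⟩
    · rintro ⟨⟨a, d⟩, c⟩ hp
      simp only [Finset.mem_sigma, Nat.mem_divisorsAntidiagonal, Finset.mem_Ioo] at hp
      obtain ⟨⟨had, hD0⟩, hc0, hca⟩ := hp
      have ha : 0 < a := by omega
      have hd : 0 < d := by
        rcases Nat.eq_zero_or_pos d with h | h
        · exfalso; rw [h] at had; simp at had; omega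
        · exact h
      have haD : a ≤ D := by
        have : a ≤ a * d := Nat.le_mul_of_pos_right a hd
        omega
      simp only [F2, mem_filter, mem_F, P]
      exact ⟨⟨by omega, by omega, by simpa using hd, by simpa using had⟩, trivial, by omega⟩
    · rintro ⟨a, b, c, d⟩ hq
      simp only [F2, mem_filter] at hq
      obtain ⟨-, hb, -⟩ := hq
      simp [hb]
    · rintro ⟨⟨a, d⟩, c⟩ _; rfl
  rw [key, Finset.card_sigma]
  have : ∀ p ∈ D.divisorsAntidiagonal, (Ioo 0 p.1).card = p.1 - 1 := by
    intro p _; rw [Nat.card_Ioo]; omega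
  rw [Finset.sum_congr rfl this]
  exact Nat.sum_divisorsAntidiagonal (fun x _ => x - 1)

lemma card_F3 (D : ℕ) (hD : 0 < D) : (F3 D).card = (F2 D).card := by
  refine Finset.card_bij' (fun q _ => (q.2.2.2, q.2.2.1, q.2.1, q.1))
    (fun q _ => (q.2.2.2, q.2.2.1, q.2.1, q.1)) ?_ ?_ ?_ ?_
  · rintro ⟨a, b, c, d⟩ hq
    simp only [F3, mem_filter, mem_F, P] at hq
    simp only [F2, mem_filter, mem_F, P]
    obtain ⟨⟨h1, h2, h3, h4⟩, hb, hc⟩ := hq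
    exact ⟨⟨by omega, h3, h2, by rw [mul_comm, mul_comm b c] at h4; exact h4⟩, hc, hb⟩
  · rintro ⟨a, b, c, d⟩ hq
    simp only [F2, mem_filter, mem_F, P] at hq
    simp only [F3, mem_filter, mem_F, P]
    obtain ⟨⟨h1, h2, h3, h4⟩, hb, hc⟩ := hq
    exact ⟨⟨by omega, h3, h2, by rw [mul_comm, mul_comm b c] at h4; exact h4⟩, hc, hb⟩
  · rintro ⟨a, b, c, d⟩ _; rfl
  · rintro ⟨a, b, c, d⟩ _; rfl

def T (D : ℕ) : Finset (ℕ × ℕ × ℕ × ℕ) :=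
  ((range (D+1)) ×ˢ (range (D+1)) ×ˢ (range (D+1)) ×ˢ (range (D+1))).filter
    (fun q => q.2.1 < q.1 ∧ 0 < q.2.1 ∧ 0 < q.2.2.1 ∧ 0 < q.2.2.2 ∧
      q.1 * q.2.2.1 + q.2.1 * q.2.2.2 = D)

lemma mem_T {D : ℕ} {q : ℕ × ℕ × ℕ × ℕ} :
    q ∈ T D ↔ q.2.1 < q.1 ∧ 0 < q.2.1 ∧ 0 < q.2.2.1 ∧ 0 < q.2.2.2 ∧
      q.1 * q.2.2.1 + q.2.1 * q.2.2.2 = D := by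
  obtain ⟨x, y, m, n⟩ := q
  simp only [T, mem_filter, mem_product, mem_range, and_iff_right_iff_imp]
  rintro ⟨h1, h2, h3, h4, h5⟩
  have hx : x ≤ x * m := Nat.le_mul_of_pos_right x h3
  have hm : m ≤ x * m := Nat.le_mul_of_pos_left m (by omega)
  have hy : y ≤ y * n := Nat.le_mul_of_pos_right y h4
  have hn : n ≤ y * n := Nat.le_mul_of_pos_left n h2
  omega

lemma card_F4 (D : ℕ) (hD : 0 < D) : (F4 D).card = (T D).card := by
  refine Finset.card_bij' (fun q _ => (q.1, q.1 - q.2.2.1, q.2.2.2 - q.2.1, q.2.1))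
    (fun q _ => (q.1, q.2.2.2, q.1 - q.2.1, q.2.2.1 + q.2.2.2)) ?_ ?_ ?_ ?_
  · rintro ⟨a, b, c, d⟩ hq
    simp only [F4, mem_filter, mem_F, P] at hq
    obtain ⟨⟨h1, h2, h3, h4⟩, hb, hc⟩ := hq
    simp only [mem_T]
    obtain ⟨f, hf⟩ : ∃ f, a = c + f := ⟨a - c, by omega⟩
    obtain ⟨e, he⟩ : ∃ e, d = b + e := ⟨d - b, by omega⟩
    subst hf; subst he
    have hce : c + f - c = f := by omega
    have hbe : b + e - b = e := by omega
    simp only [hce, hbe]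
    have h5 : b * c + ((c + f) * e + f * b) = (c + f) * (b + e) := by ring
    refine ⟨by omega, by omega, by omega, by omega, by omega⟩
  · rintro ⟨x, y, m, n⟩ hq
    simp only [mem_T] at hq
    obtain ⟨h1, h2, h3, h4, h5⟩ := hq
    simp only [F4, mem_filter, mem_F, P]
    obtain ⟨t, ht⟩ : ∃ t, x = y + t := ⟨x - y, by omega⟩
    subst ht
    have hyt : y + t - y = t := by omega
    simp only [hyt]
    have e1' : (y + t) * (m + n) = ((y + t) * m + y * n) + n * t := by ring
    have e2 : y + t ≤ (y + t) * m := Nat.le_mul_of_pos_right _ h3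
    have e3 : n ≤ y * n := Nat.le_mul_of_pos_left n h2
    refine ⟨⟨by omega, by omega, by omega, by omega⟩, by omega, by omega⟩
  · rintro ⟨a, b, c, d⟩ hq
    simp only [F4, mem_filter, mem_F, P] at hq
    obtain ⟨⟨h1, h2, h3, h4⟩, hb, hc⟩ := hq
    dsimp only
    rw [show d - b + b = d by omega, show a - (a - c) = c by omega]
  · rintro ⟨x, y, m, n⟩ hq
    simp only [mem_T] at hq
    obtain ⟨h1, h2, h3, h4, h5⟩ := hq
    dsimp only
    rw [show x - (x - y) = y by omega, show m + n - n = m by omega]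

lemma max'_of_eq {s : Finset ℕ} {x y : ℕ} (H : s.Nonempty) (hs : s = {x, y}) (h : y < x) :
    s.max' H = x := by
  apply le_antisymm
  · apply Finset.max'_le
    intro b hb
    rw [hs, Finset.mem_insert, Finset.mem_singleton] at hb
    rcases hb with rfl | rfl
    · exact le_refl b
    · omega
  · apply Finset.le_max'
    rw [hs]
    exact Finset.mem_insert_self _ _

lemma min'_of_eq {s : Finset ℕ} {x y : ℕ} (H : s.Nonempty) (hs : s = {x, y}) (h : y < x) :
    s.min' H = y := by
  apply le_antisymm
  · apply Finset.min'_le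
    rw [hs, Finset.mem_insert, Finset.mem_singleton]
    exact Or.inr rfl
  · apply Finset.le_min'
    intro b hb
    rw [hs, Finset.mem_insert, Finset.mem_singleton] at hb
    rcases hb with rfl | rfl
    · omega
    · exact le_refl b

lemma toFinset_rep_add {x y m n : ℕ} (hm : m ≠ 0) (hn : n ≠ 0) :
    (Multiset.replicate m x + Multiset.replicate n y).toFinset = {x, y} := by
  ext a
  simp [Multiset.mem_replicate, hm, hn]

/-- structure of a partition with exactly two distinct parts -/
lemma decomp {D : ℕ} (p : Nat.Partition D) (H : p.parts.toFinset.Nonempty)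
    (h2 : p.parts.toFinset.card = 2) :
    p.parts.toFinset.min' H < p.parts.toFinset.max' H ∧
    0 < p.parts.toFinset.min' H ∧
    0 < p.parts.count (p.parts.toFinset.max' H) ∧
    0 < p.parts.count (p.parts.toFinset.min' H) ∧
    p.parts = Multiset.replicate (p.parts.count (p.parts.toFinset.max' H))
        (p.parts.toFinset.max' H)
      + Multiset.replicate (p.parts.count (p.parts.toFinset.min' H))
        (p.parts.toFinset.min' H) ∧
    (p.parts.toFinset.max' H) * p.parts.count (p.parts.toFinset.max' H)
      + (p.parts.toFinset.min' H) * p.parts.count (p.parts.toFinset.min' H) = D := by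
  set x := p.parts.toFinset.max' H with hx
  set y := p.parts.toFinset.min' H with hy
  have hxm : x ∈ p.parts.toFinset := Finset.max'_mem _ _
  have hym : y ∈ p.parts.toFinset := Finset.min'_mem _ _
  have hyx : y < x := Finset.min'_lt_max'_of_card _ (by omega)
  have hxy : x ≠ y := by omega
  have hset : p.parts.toFinset = {x, y} := by
    apply (Finset.eq_of_subset_of_card_le ?_ ?_).symm
    · intro a ha
      rw [Finset.mem_insert, Finset.mem_singleton] at ha
      rcases ha with rfl | rfl <;> assumption
    · rw [h2, Finset.card_pair hxy]
  have hxp : x ∈ p.parts := Multiset.mem_toFinset.mp hxm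
  have hyp : y ∈ p.parts := Multiset.mem_toFinset.mp hym
  have hy0 : 0 < y := p.parts_pos hyp
  have hcx : 0 < p.parts.count x := Multiset.count_pos.mpr hxp
  have hcy : 0 < p.parts.count y := Multiset.count_pos.mpr hyp
  have hd : p.parts = Multiset.replicate (p.parts.count x) x
      + Multiset.replicate (p.parts.count y) y := by
    apply Multiset.ext.mpr
    intro a
    rw [Multiset.count_add, Multiset.count_replicate, Multiset.count_replicate]
    by_cases hax : x = a
    · subst hax
      rw [if_pos rfl, if_neg (by omega)]
      omega
    · by_cases hay : y = a
      · subst hay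
        rw [if_pos rfl, if_neg hax]
        omega
      · rw [if_neg hax, if_neg hay]
        have : a ∉ p.parts := by
          intro ha
          have := Multiset.mem_toFinset.mpr ha
          rw [hset, Finset.mem_insert, Finset.mem_singleton] at this
          rcases this with rfl | rfl
          · exact hax rfl
          · exact hay rfl
        simp [Multiset.count_eq_zero_of_notMem this]
  refine ⟨hyx, hy0, hcx, hcy, hd, ?_⟩
  have hsum := p.parts_sum
  rw [hd] at hsum
  rw [Multiset.sum_add, Multiset.sum_replicate, Multiset.sum_replicate,
    smul_eq_mul, smul_eq_mul] at hsum
  rw [mul_comm x _, mul_comm y _]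
  exact hsum

def mkPart (D x y m n : ℕ) (hx : 0 < x) (hy : 0 < y) (hs : x * m + y * n = D) :
    Nat.Partition D where
  parts := Multiset.replicate m x + Multiset.replicate n y
  parts_pos := by
    intro i hi
    rcases Multiset.mem_add.mp hi with h | h <;>
      rw [Multiset.eq_of_mem_replicate h] <;> assumption
  parts_sum := by
    rw [Multiset.sum_add, Multiset.sum_replicate, Multiset.sum_replicate,
      smul_eq_mul, smul_eq_mul, mul_comm m x, mul_comm n y]
    exact hs

lemma card_T (D : ℕ) (hD : 0 < D) : (T D).card = nuTwo D := by
  rw [nuTwo]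
  refine Finset.card_bij'
    (fun q hq => mkPart D q.1 q.2.1 q.2.2.1 q.2.2.2
      (lt_trans (mem_T.mp hq).2.1 (mem_T.mp hq).1) (mem_T.mp hq).2.1
      (mem_T.mp hq).2.2.2.2)
    (fun p hp =>
      have H : p.parts.toFinset.Nonempty :=
        Finset.card_pos.mp (by rw [(Finset.mem_filter.mp hp).2]; omega)
      (p.parts.toFinset.max' H, p.parts.toFinset.min' H,
        p.parts.count (p.parts.toFinset.max' H), p.parts.count (p.parts.toFinset.min' H)))
    ?_ ?_ ?_ ?_
  · rintro ⟨x, y, m, n⟩ hq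
    have hq' := mem_T.mp hq
    dsimp only at hq'
    obtain ⟨h1, h2, h3, h4, h5⟩ := hq'
    simp only [Finset.mem_filter, Finset.mem_univ, true_and]
    show (Multiset.replicate _ _ + Multiset.replicate _ _).toFinset.card = 2
    rw [toFinset_rep_add (by omega) (by omega), Finset.card_pair (by omega)]
  · rintro p hp
    have hp2 := (Finset.mem_filter.mp hp).2
    have H : p.parts.toFinset.Nonempty := Finset.card_pos.mp (by omega)
    obtain ⟨d1, d2, d3, d4, d5, d6⟩ := decomp p H hp2
    rw [mem_T]
    exact ⟨d1, d2, d3, d4, d6⟩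
  · rintro ⟨x, y, m, n⟩ hq
    have hq' := mem_T.mp hq
    dsimp only at hq'
    obtain ⟨h1, h2, h3, h4, h5⟩ := hq'
    have hparts : (mkPart D x y m n (lt_trans h2 h1) h2 h5).parts
        = Multiset.replicate m x + Multiset.replicate n y := rfl
    have hset : (mkPart D x y m n (lt_trans h2 h1) h2 h5).parts.toFinset = {x, y} := by
      rw [hparts]; exact toFinset_rep_add (by omega) (by omega)
    dsimp only
    rw [max'_of_eq _ hset h1, min'_of_eq _ hset h1]
    have hcx : (mkPart D x y m n (lt_trans h2 h1) h2 h5).parts.count x = m := by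
      rw [hparts, Multiset.count_add, Multiset.count_replicate_self,
        Multiset.count_replicate, if_neg (by omega)]
      omega
    have hcy : (mkPart D x y m n (lt_trans h2 h1) h2 h5).parts.count y = n := by
      rw [hparts, Multiset.count_add, Multiset.count_replicate_self,
        Multiset.count_replicate, if_neg (by omega)]
      omega
    rw [hcx, hcy]
  · rintro p hp
    have hp2 := (Finset.mem_filter.mp hp).2
    have H : p.parts.toFinset.Nonempty := Finset.card_pos.mp (by omega)
    obtain ⟨d1, d2, d3, d4, d5, d6⟩ := decomp p H hp2
    apply Nat.Partition.ext
    show Multiset.replicate _ _ + Multiset.replicate _ _ = p.parts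
    exact d5.symm


end OrphanProof

theorem stmt_0 (D : ℕ) (hD : 0 < D) :
    (orphanCount D : ℤ) =
      (nuTwo D : ℤ) + 2 * (∑ d ∈ D.divisors, (d : ℤ)) - (D.divisors.card : ℤ) := by
  open OrphanProof in
  rw [orphanCount_eq_card_F, card_F_split, card_F1 D hD, card_F2 D hD, card_F3 D hD,
    card_F2 D hD, card_F4 D hD, card_T D hD]
  have h1 : ((∑ d ∈ D.divisors, (d - 1) : ℕ) : ℤ)
      = (∑ d ∈ D.divisors, (d : ℤ)) - (D.divisors.card : ℤ) := by
    rw [Nat.cast_sum, Finset.card_eq_sum_ones, Nat.cast_sum, ← Finset.sum_sub_distrib]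
    refine Finset.sum_congr rfl (fun d hd => ?_)
    have : 1 ≤ d := Nat.pos_of_mem_divisors hd
    push_cast
    omega
  rw [Nat.cast_add, Nat.cast_add, Nat.cast_add, h1]
  ring
end

section
/- For every positive integer D, the number of quadruples (a,b,c,d) of integers with b ≥ 1, c ≥ 1, b + c < D, a > c, d > b, and ad = D + bc equals ν₂(D). -/
open Multiset

theorem Multiset.eq_replicate_add_replicate_of_toFinset_eq_pair {α : Type*} [DecidableEq α]
    {M : Multiset α} {s t : α} (hst : s ≠ t) (h : M.toFinset = {s, t}) :
    M = replicate (M.count s) s + replicate (M.count t) t := by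
  conv_lhs => rw [← toFinset_sum_count_nsmul_eq M, h, Finset.sum_pair hst]
  simp only [nsmul_singleton]

theorem Multiset.exists_lt_toFinset_eq_pair {α : Type*} [LinearOrder α] {M : Multiset α}
    (h : M.toFinset.card = 2) : ∃ s t, t < s ∧ M.toFinset = {s, t} := by
  obtain ⟨a, b, hab, hM⟩ := Finset.card_eq_two.1 h
  rcases hab.lt_or_gt with hlt | hlt
  · exact ⟨b, a, hlt, hM.trans (Finset.pair_comm a b)⟩
  · exact ⟨a, b, hlt, hM⟩

theorem Multiset.toFinset_replicate_add_replicate {α : Type*} [DecidableEq α] {m n : ℕ}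
    (hm : m ≠ 0) (hn : n ≠ 0) (s t : α) :
    (replicate m s + replicate n t).toFinset = {s, t} := by
  rw [toFinset_add, toFinset_replicate, toFinset_replicate, if_neg hm, if_neg hn]
  rfl

theorem Finset.eq_and_eq_of_pair_eq_pair {α : Type*} [LinearOrder α] {s t s' t' : α}
    (hts : t < s) (hts' : t' < s') (h : ({s, t} : Finset α) = {s', t'}) : s = s' ∧ t = t' := by
  have hs : s ∈ ({s', t'} : Finset α) := h ▸ by simp
  have ht : t ∈ ({s', t'} : Finset α) := h ▸ by simp
  have hs' : s' ∈ ({s, t} : Finset α) := h ▸ by simp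
  simp only [Finset.mem_insert, Finset.mem_singleton] at hs ht hs'
  grind

theorem Multiset.replicate_add_replicate_inj {α : Type*} [LinearOrder α] {m n m' n' : ℕ}
    {s t s' t' : α} (hm : m ≠ 0) (hn : n ≠ 0) (hm' : m' ≠ 0) (hn' : n' ≠ 0)
    (hts : t < s) (hts' : t' < s')
    (h : replicate m s + replicate n t = replicate m' s' + replicate n' t') :
    m = m' ∧ n = n' ∧ s = s' ∧ t = t' := by
  have hpair := congrArg toFinset h
  rw [toFinset_replicate_add_replicate hm hn, toFinset_replicate_add_replicate hm' hn'] at hpair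
  obtain ⟨rfl, rfl⟩ := Finset.eq_and_eq_of_pair_eq_pair hts hts' hpair
  have hs := congrArg (count s) h
  have ht := congrArg (count t) h
  simp only [count_add, count_replicate, hts.ne, hts.ne', if_true, if_false, add_zero,
    zero_add] at hs ht
  exact ⟨hs, ht, rfl, rfl⟩

/-- `(m, n, s, t)` encodes the partition of `D` into `m` parts `s` and `n` parts `t`. -/
def twoSizeData (D : ℕ) : Set (ℕ × ℕ × ℕ × ℕ) :=
  {(m, n, s, t) : ℕ × ℕ × ℕ × ℕ | m ≠ 0 ∧ n ≠ 0 ∧ 0 < t ∧ t < s ∧ m * s + n * t = D}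

def twoSizeMultiset : ℕ × ℕ × ℕ × ℕ → Multiset ℕ
  | (m, n, s, t) => replicate m s + replicate n t

theorem sum_twoSizeMultiset (m n s t : ℕ) :
    (twoSizeMultiset (m, n, s, t)).sum = m * s + n * t := by
  simp [twoSizeMultiset, sum_replicate]

theorem twoSizeMultiset_injOn (D : ℕ) : Set.InjOn twoSizeMultiset (twoSizeData D) := by
  rintro ⟨m, n, s, t⟩ ⟨hm, hn, -, hts, -⟩ ⟨m', n', s', t'⟩ ⟨hm', hn', -, hts', -⟩ h
  obtain ⟨rfl, rfl, rfl, rfl⟩ := replicate_add_replicate_inj hm hn hm' hn' hts hts' h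
  rfl

theorem image_parts_setOf_card_toFinset_eq_two (D : ℕ) :
    Nat.Partition.parts '' {p : Nat.Partition D | p.parts.toFinset.card = 2} =
      twoSizeMultiset '' twoSizeData D := by
  ext M
  constructor
  · rintro ⟨p, hp, rfl⟩
    obtain ⟨s, t, hts, hpair⟩ := exists_lt_toFinset_eq_pair hp
    have hM := eq_replicate_add_replicate_of_toFinset_eq_pair hts.ne' hpair
    have hmem (x : ℕ) (hx : x ∈ ({s, t} : Finset ℕ)) : x ∈ p.parts := by
      rwa [← Multiset.mem_toFinset, hpair]
    refine ⟨(p.parts.count s, p.parts.count t, s, t),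
      ⟨count_ne_zero.2 (hmem s (by simp)), count_ne_zero.2 (hmem t (by simp)),
        p.parts_pos (hmem t (by simp)), hts, ?_⟩, hM.symm⟩
    rw [← sum_twoSizeMultiset, twoSizeMultiset, ← hM, p.parts_sum]
  · rintro ⟨⟨m, n, s, t⟩, ⟨hm, hn, ht, hts, hsum⟩, rfl⟩
    refine ⟨⟨twoSizeMultiset (m, n, s, t), fun hx => ?_,
      (sum_twoSizeMultiset m n s t).trans hsum⟩, ?_, rfl⟩
    · rcases mem_add.1 hx with hx | hx <;> rw [eq_of_mem_replicate hx] <;> omega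
    · show (replicate m s + replicate n t).toFinset.card = 2
      rw [toFinset_replicate_add_replicate hm hn, Finset.card_pair hts.ne']

def quadruples (D : ℕ) : Set (ℤ × ℤ × ℤ × ℤ) :=
  {q | 1 ≤ q.2.1 ∧ 1 ≤ q.2.2.1 ∧ q.2.1 + q.2.2.1 < D ∧ q.1 > q.2.2.1 ∧ q.2.2.2 > q.2.1 ∧
    q.1 * q.2.2.2 = D + q.2.1 * q.2.2.1}

def toQuadruple : ℕ × ℕ × ℕ × ℕ → ℤ × ℤ × ℤ × ℤ
  | (m, n, s, t) => (m + n, s - t, n, s)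

theorem toQuadruple_injective : Function.Injective toQuadruple := by
  rintro ⟨m, n, s, t⟩ ⟨m', n', s', t'⟩ h
  simp only [toQuadruple, Prod.mk.injEq] at h
  simp only [Prod.mk.injEq]
  omega

theorem image_toQuadruple_twoSizeData (D : ℕ) :
    toQuadruple '' twoSizeData D = quadruples D := by
  ext ⟨a, b, c, d⟩
  simp only [quadruples, Set.mem_ofPred_eq]
  constructor
  · rintro ⟨⟨m, n, s, t⟩, ⟨hm, hn, ht, hts, hsum⟩, h⟩
    simp only [toQuadruple, Prod.mk.injEq] at h
    obtain ⟨rfl, rfl, rfl, rfl⟩ := h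
    have hD : (D : ℤ) = m * s + n * t := by exact_mod_cast hsum.symm
    refine ⟨by omega, by omega, ?_, by omega, by omega, by rw [hD]; ring⟩
    have hms : (s : ℤ) ≤ m * s := le_mul_of_one_le_left (by positivity) (by omega)
    have hnt : (n : ℤ) ≤ n * t := le_mul_of_one_le_right (by positivity) (by omega)
    omega
  · rintro ⟨hb, hc, hbc, hca, hdb, hprod⟩
    lift c to ℕ using by omega
    lift d to ℕ using by omega
    obtain ⟨m, rfl⟩ : ∃ m : ℕ, a = m + c := ⟨(a - c).toNat, by omega⟩
    obtain ⟨t, rfl⟩ : ∃ t : ℕ, b = d - t := ⟨(d - b).toNat, by omega⟩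
    have hsum : ((m * d + c * t : ℕ) : ℤ) = D := by push_cast; linear_combination hprod
    exact ⟨(m, c, d, t), ⟨by omega, by omega, by omega, by omega, by exact_mod_cast hsum⟩, rfl⟩

theorem nuTwo_eq_ncard (D : ℕ) :
    nuTwo D = {p : Nat.Partition D | p.parts.toFinset.card = 2}.ncard := by
  rw [nuTwo, ← Set.ncard_coe_finset, Finset.coe_filter_univ]

theorem stmt_1_general (D : ℕ) :
    Set.ncard {q : ℤ × ℤ × ℤ × ℤ |
      1 ≤ q.2.1 ∧ 1 ≤ q.2.2.1 ∧ q.2.1 + q.2.2.1 < D ∧ q.1 > q.2.2.1 ∧ q.2.2.2 > q.2.1 ∧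
      q.1 * q.2.2.2 = D + q.2.1 * q.2.2.1} = nuTwo D := by
  change (quadruples D).ncard = nuTwo D
  rw [← image_toQuadruple_twoSizeData, Set.ncard_image_of_injective _ toQuadruple_injective,
    ← (twoSizeMultiset_injOn D).ncard_image, ← image_parts_setOf_card_toFinset_eq_two,
    Set.ncard_image_of_injective _ fun _ _ => Nat.Partition.ext, nuTwo_eq_ncard]

theorem stmt_1 (D : ℕ) (hD : 0 < D) :
    Set.ncard {q : ℤ × ℤ × ℤ × ℤ |
      1 ≤ q.2.1 ∧ 1 ≤ q.2.2.1 ∧ q.2.1 + q.2.2.1 < D ∧ q.1 > q.2.2.1 ∧ q.2.2.2 > q.2.1 ∧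
      q.1 * q.2.2.2 = D + q.2.1 * q.2.2.1} = nuTwo D :=
  stmt_1_general D
end

section
/- Every 2×2 matrix M with nonnegative integer entries and determinant 1 can be written in exactly one way as a finite (possibly empty) product M = M₁ · M₂ · ⋯ · Mₙ with each Mᵢ ∈ {L₁, R₁}; that is, there is a unique finite list over {L₁, R₁} whose product is M. -/
/-!
Left multiplication by `L₁` adds the first row to the second, and by `R₁` the second row to the
first. Hence the first letter of a word is visible in its product: the row that was added to is
the entrywise larger one, and the two cases exclude each other because the diagonal of every
product is positive. Reading letters off the front therefore recovers the word, which gives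
uniqueness. Conversely, a determinant-one matrix other than `1` always has one row dominating the
other, so subtracting it is a Euclidean step that lowers the entry sum, which gives existence.
-/

def L₁ : Matrix (Fin 2) (Fin 2) ℕ := !![1, 0; 1, 1]

def R₁ : Matrix (Fin 2) (Fin 2) ℕ := !![1, 1; 0, 1]

open Matrix

def IsLRWord (l : List (Matrix (Fin 2) (Fin 2) ℕ)) : Prop :=
  ∀ A ∈ l, A = L₁ ∨ A = R₁

theorem isLRWord_nil : IsLRWord [] := by simp [IsLRWord]

theorem isLRWord_cons {A : Matrix (Fin 2) (Fin 2) ℕ} {l : List (Matrix (Fin 2) (Fin 2) ℕ)} :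
    IsLRWord (A :: l) ↔ (A = L₁ ∨ A = R₁) ∧ IsLRWord l :=
  List.forall_mem_cons

theorem L₁_mul (P : Matrix (Fin 2) (Fin 2) ℕ) :
    L₁ * P = !![P 0 0, P 0 1; P 0 0 + P 1 0, P 0 1 + P 1 1] := by
  ext i j
  fin_cases i <;> fin_cases j <;> simp [L₁, mul_apply, Fin.sum_univ_two]

theorem R₁_mul (P : Matrix (Fin 2) (Fin 2) ℕ) :
    R₁ * P = !![P 0 0 + P 1 0, P 0 1 + P 1 1; P 1 0, P 1 1] := by
  ext i j
  fin_cases i <;> fin_cases j <;> simp [R₁, mul_apply, Fin.sum_univ_two]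

theorem IsLRWord.one_le_prod_diag {l : List (Matrix (Fin 2) (Fin 2) ℕ)} (hl : IsLRWord l) :
    1 ≤ l.prod 0 0 ∧ 1 ≤ l.prod 1 1 := by
  induction l with
  | nil => simp
  | cons A l ih =>
    obtain ⟨hA, hl⟩ := isLRWord_cons.1 hl
    have := ih hl
    rcases hA with rfl | rfl
    · simp only [List.prod_cons, L₁_mul, of_apply, cons_val_zero, cons_val_one]
      omega
    · simp only [List.prod_cons, R₁_mul, of_apply, cons_val_zero, cons_val_one]
      omega

section Cancellation

variable {P Q : Matrix (Fin 2) (Fin 2) ℕ}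

theorem L₁_mul_ne_one : L₁ * P ≠ 1 := by
  intro h
  rw [L₁_mul, one_fin_two] at h
  simp only [EmbeddingLike.apply_eq_iff_eq, vecCons_inj, and_true] at h
  omega

theorem R₁_mul_ne_one : R₁ * P ≠ 1 := by
  intro h
  rw [R₁_mul, one_fin_two] at h
  simp only [EmbeddingLike.apply_eq_iff_eq, vecCons_inj, and_true] at h
  omega

theorem L₁_mul_ne_R₁_mul (hQ : 1 ≤ Q 0 0) : L₁ * P ≠ R₁ * Q := by
  intro h
  rw [L₁_mul, R₁_mul] at h
  simp only [EmbeddingLike.apply_eq_iff_eq, vecCons_inj, and_true] at h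
  omega

theorem L₁_mul_left_cancel (h : L₁ * P = L₁ * Q) : P = Q := by
  rw [L₁_mul, L₁_mul] at h
  simp only [EmbeddingLike.apply_eq_iff_eq, vecCons_inj, and_true] at h
  ext i j
  fin_cases i <;> fin_cases j <;> simp <;> omega

theorem R₁_mul_left_cancel (h : R₁ * P = R₁ * Q) : P = Q := by
  rw [R₁_mul, R₁_mul] at h
  simp only [EmbeddingLike.apply_eq_iff_eq, vecCons_inj, and_true] at h
  ext i j
  fin_cases i <;> fin_cases j <;> simp <;> omega

end Cancellation

theorem IsLRWord.eq_of_prod_eq {l₁ l₂ : List (Matrix (Fin 2) (Fin 2) ℕ)} (h₁ : IsLRWord l₁)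
    (h₂ : IsLRWord l₂) (h : l₁.prod = l₂.prod) : l₁ = l₂ := by
  induction l₁ generalizing l₂ with
  | nil =>
    cases l₂ with
    | nil => rfl
    | cons B l₂ =>
      rcases (isLRWord_cons.1 h₂).1 with rfl | rfl
      · exact absurd h.symm L₁_mul_ne_one
      · exact absurd h.symm R₁_mul_ne_one
  | cons A l₁ ih =>
    obtain ⟨hA, ht₁⟩ := isLRWord_cons.1 h₁
    cases l₂ with
    | nil =>
      rcases hA with rfl | rfl
      · exact absurd h L₁_mul_ne_one
      · exact absurd h R₁_mul_ne_one
    | cons B l₂ =>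
      obtain ⟨hB, ht₂⟩ := isLRWord_cons.1 h₂
      rw [List.prod_cons, List.prod_cons] at h
      rcases hA with rfl | rfl <;> rcases hB with rfl | rfl
      · rw [ih ht₁ ht₂ (L₁_mul_left_cancel h)]
      · exact absurd h (L₁_mul_ne_R₁_mul ht₂.one_le_prod_diag.1)
      · exact absurd h.symm (L₁_mul_ne_R₁_mul ht₁.one_le_prod_diag.1)
      · rw [ih ht₁ ht₂ (R₁_mul_left_cancel h)]

theorem eq_identity_or_rows_le_or_rows_ge {a b c d : ℕ} (h : a * d = b * c + 1) :
    (a = 1 ∧ b = 0 ∧ c = 0 ∧ d = 1) ∨ (a ≤ c ∧ b ≤ d) ∨ (c ≤ a ∧ d ≤ b) := by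
  by_contra! hne
  obtain ⟨hid, hL, hR⟩ := hne
  rcases le_or_gt a c with hac | hca
  · nlinarith [Nat.mul_le_mul hac (hL hac).le]
  · have hbc : b + c = 0 := by nlinarith [Nat.mul_le_mul hca (hR hca.le)]
    obtain ⟨rfl, rfl⟩ : b = 0 ∧ c = 0 := by omega
    obtain ⟨rfl, rfl⟩ := mul_eq_one.1 (show a * d = 1 by simpa using h)
    exact hid rfl rfl rfl rfl

theorem exists_eq_mul_of_det_eq_one {M : Matrix (Fin 2) (Fin 2) ℕ}
    (hdet : M 0 0 * M 1 1 = M 0 1 * M 1 0 + 1) (hM : M ≠ 1) :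
    ∃ A P : Matrix (Fin 2) (Fin 2) ℕ, (A = L₁ ∨ A = R₁) ∧ M = A * P ∧
      P 0 0 * P 1 1 = P 0 1 * P 1 0 + 1 ∧
      P 0 0 + P 0 1 + P 1 0 + P 1 1 < M 0 0 + M 0 1 + M 1 0 + M 1 1 := by
  have h00 : M 0 0 ≠ 0 := by rintro h; simp [h] at hdet
  have h11 : M 1 1 ≠ 0 := by rintro h; simp [h] at hdet
  rcases eq_identity_or_rows_le_or_rows_ge hdet with
    ⟨ha, hb, hc, hd⟩ | ⟨hle₀, hle₁⟩ | ⟨hle₀, hle₁⟩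
  · exact absurd (by rw [eta_fin_two M, one_fin_two, ha, hb, hc, hd]) hM
  · refine ⟨L₁, !![M 0 0, M 0 1; M 1 0 - M 0 0, M 1 1 - M 0 1], .inl rfl, ?_, ?_, ?_⟩
    · rw [L₁_mul]
      ext i j
      fin_cases i <;> fin_cases j <;> simp <;> omega
    · simp only [of_apply, cons_val_zero, cons_val_one]
      zify [hle₀, hle₁] at hdet ⊢
      linear_combination hdet
    · simp only [of_apply, cons_val_zero, cons_val_one]
      omega
  · refine ⟨R₁, !![M 0 0 - M 1 0, M 0 1 - M 1 1; M 1 0, M 1 1], .inr rfl, ?_, ?_, ?_⟩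
    · rw [R₁_mul]
      ext i j
      fin_cases i <;> fin_cases j <;> simp <;> omega
    · simp only [of_apply, cons_val_zero, cons_val_one]
      zify [hle₀, hle₁] at hdet ⊢
      linear_combination hdet
    · simp only [of_apply, cons_val_zero, cons_val_one]
      omega

theorem exists_isLRWord_prod_eq {M : Matrix (Fin 2) (Fin 2) ℕ}
    (hdet : M 0 0 * M 1 1 = M 0 1 * M 1 0 + 1) : ∃ l, IsLRWord l ∧ l.prod = M := by
  induction hn : M 0 0 + M 0 1 + M 1 0 + M 1 1 using Nat.strong_induction_on generalizing M with
  | _ n ih =>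
  by_cases hM : M = 1
  · exact ⟨[], isLRWord_nil, hM ▸ List.prod_nil⟩
  obtain ⟨A, P, hA, rfl, hPdet, hlt⟩ := exists_eq_mul_of_det_eq_one hdet hM
  obtain ⟨l, hl, rfl⟩ := ih _ (hn ▸ hlt) hPdet rfl
  exact ⟨A :: l, isLRWord_cons.2 ⟨hA, hl⟩, List.prod_cons⟩

theorem stmt_9 (M : Matrix (Fin 2) (Fin 2) ℕ)
    (hdet : (M 0 0 : ℤ) * M 1 1 - M 0 1 * M 1 0 = 1) :
    ∃! l : List (Matrix (Fin 2) (Fin 2) ℕ),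
      (∀ A ∈ l, A = L₁ ∨ A = R₁) ∧ l.prod = M := by
  obtain ⟨l, hl, hprod⟩ := exists_isLRWord_prod_eq (M := M) (by zify; linarith)
  exact ⟨l, ⟨hl, hprod⟩, fun l' ⟨hl', hprod'⟩ =>
    IsLRWord.eq_of_prod_eq hl' hl (hprod'.trans hprod.symm)⟩
end

section
/- For every 2×2 matrix M with nonnegative integer entries and nonzero determinant, there exist a unique finite (possibly empty) list (M₁, …, Mₙ) with each Mᵢ ∈ {L₁, R₁} and a unique 2×2 matrix M₀ = [a₀ b₀; c₀ d₀] with nonnegative integer entries satisfying (a₀ < c₀ and b₀ > d₀) or (a₀ > c₀ and b₀ < d₀), such that M = M₁ · ⋯ · Mₙ · M₀. -/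
/-! A nonnegative matrix is `L₁ * X` (resp. `R₁ * X`) with `X` nonnegative exactly when its
first row is entrywise below (resp. above) its second, and `X` is then obtained by subtracting
one row from the other. The matrices `M₀` of the statement are those with incomparable rows, so
peeling off generators on the left is forced at every step. A nonzero determinant (preserved by
peeling) rules out equal rows, so at most one generator can be peeled, and zero rows, so the
entry sum strictly drops and the process terminates. -/

namespace LRFactorization

open Matrix

section NatDet

variable {n : Type*} [Fintype n] [DecidableEq n]

def natDet (M : Matrix n n ℕ) : ℤ := (M.map ((↑) : ℕ → ℤ)).det

theorem natDet_mul (A B : Matrix n n ℕ) : natDet (A * B) = natDet A * natDet B :=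
  (congrArg det (Matrix.map_mul (f := Nat.castRingHom ℤ))).trans (det_mul _ _)

theorem mul_right_injective_of_isUnit_natDet {A : Matrix n n ℕ} (hA : IsUnit (natDet A)) :
    Function.Injective (A * ·) := by
  intro X Y h
  have hmap := congrArg (Matrix.map · (Nat.castRingHom ℤ)) h
  simp only [Matrix.map_mul] at hmap
  exact map_injective Nat.cast_injective
    (((isUnit_iff_isUnit_det _).2 hA).mul_left_cancel hmap)

theorem natDet_eq_zero_of_row_eq {M : Matrix n n ℕ} {i j : n} (hij : i ≠ j) (h : M i = M j) :
    natDet M = 0 :=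
  det_zero_of_row_eq hij (by ext k; simp [congrFun h k])

theorem natDet_eq_zero_of_row_eq_zero {M : Matrix n n ℕ} {i : n} (h : M i = 0) : natDet M = 0 :=
  det_eq_zero_of_row_eq_zero i (by simp [h])

end NatDet

local notation "Mat₂" => Matrix (Fin 2) (Fin 2) ℕ

theorem natDet_fin_two (M : Mat₂) : natDet M = M 0 0 * M 1 1 - M 0 1 * M 1 0 := by
  simp [natDet, det_fin_two]

@[simp] theorem L₁_mul_zero (X : Mat₂) : (L₁ * X) 0 = X 0 := by
  ext j; simp [L₁, mul_apply, Fin.sum_univ_two]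

@[simp] theorem L₁_mul_one (X : Mat₂) : (L₁ * X) 1 = X 0 + X 1 := by
  ext j; simp [L₁, mul_apply, Fin.sum_univ_two]

@[simp] theorem R₁_mul_zero (X : Mat₂) : (R₁ * X) 0 = X 0 + X 1 := by
  ext j; simp [R₁, mul_apply, Fin.sum_univ_two]

@[simp] theorem R₁_mul_one (X : Mat₂) : (R₁ * X) 1 = X 1 := by
  ext j; simp [R₁, mul_apply, Fin.sum_univ_two]

theorem natDet_L₁ : natDet L₁ = 1 := by simp [natDet_fin_two, L₁]

theorem natDet_R₁ : natDet R₁ = 1 := by simp [natDet_fin_two, R₁]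

def IsGenerator (A : Mat₂) : Prop := A = L₁ ∨ A = R₁

theorem IsGenerator.natDet_eq_one {A : Mat₂} (hA : IsGenerator A) : natDet A = 1 := by
  rcases hA with rfl | rfl
  exacts [natDet_L₁, natDet_R₁]

theorem IsGenerator.natDet_mul {A : Mat₂} (hA : IsGenerator A) (X : Mat₂) :
    natDet (A * X) = natDet X := by
  rw [LRFactorization.natDet_mul, hA.natDet_eq_one, one_mul]

theorem IsGenerator.mul_right_injective {A : Mat₂} (hA : IsGenerator A) :
    Function.Injective (A * ·) :=
  mul_right_injective_of_isUnit_natDet (hA.natDet_eq_one ▸ isUnit_one)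

def IsTerminal (N : Mat₂) : Prop := ¬ N 0 ≤ N 1 ∧ ¬ N 1 ≤ N 0

theorem isTerminal_iff (N : Mat₂) :
    IsTerminal N ↔ (N 0 0 < N 1 0 ∧ N 1 1 < N 0 1) ∨ (N 1 0 < N 0 0 ∧ N 0 1 < N 1 1) := by
  simp only [IsTerminal, Pi.le_def, Fin.forall_fin_two]
  omega

theorem IsGenerator.not_isTerminal_mul {A : Mat₂} (hA : IsGenerator A) (X : Mat₂) :
    ¬ IsTerminal (A * X) := by
  rintro ⟨h01, h10⟩
  rcases hA with rfl | rfl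
  · exact h01 (by simp)
  · exact h10 (by simp)

theorem exists_isGenerator_mul_eq_of_not_isTerminal {M : Mat₂} (hM : ¬ IsTerminal M) :
    ∃ A X, IsGenerator A ∧ A * X = M := by
  by_cases h01 : M 0 ≤ M 1
  · refine ⟨L₁, of ![M 0, M 1 - M 0], Or.inl rfl, funext fun i => ?_⟩
    fin_cases i
    exacts [L₁_mul_zero _, (L₁_mul_one _).trans (add_tsub_cancel_of_le h01)]
  · have h10 : M 1 ≤ M 0 := by simpa [IsTerminal, h01] using hM
    refine ⟨R₁, of ![M 0 - M 1, M 1], Or.inr rfl, funext fun i => ?_⟩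
    fin_cases i
    exacts [(R₁_mul_zero _).trans (tsub_add_cancel_of_le h10), R₁_mul_one _]

theorem IsGenerator.eq_and_eq_of_mul_eq_mul {A B X Y : Mat₂} (hA : IsGenerator A)
    (hB : IsGenerator B) (hdet : natDet (A * X) ≠ 0) (h : A * X = B * Y) : A = B ∧ X = Y := by
  suffices A = B from ⟨this, hA.mul_right_injective (h.trans (this ▸ rfl))⟩
  have rows_ne : (A * X) 0 ≠ (A * X) 1 := fun h' => hdet (natDet_eq_zero_of_row_eq zero_ne_one h')
  rcases hA with rfl | rfl <;> rcases hB with rfl | rfl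
  · rfl
  · exact absurd (le_antisymm (by simp) (by rw [h]; simp)) rows_ne
  · exact absurd (le_antisymm (by rw [h]; simp) (by simp)) rows_ne
  · rfl

def entrySum (M : Mat₂) : ℕ := ∑ i, ∑ j, M i j

theorem IsGenerator.entrySum_lt_mul {A X : Mat₂} (hA : IsGenerator A) (hX : natDet X ≠ 0) :
    entrySum X < entrySum (A * X) := by
  have row_ne_zero (i : Fin 2) : X i 0 + X i 1 ≠ 0 := fun h =>
    hX (natDet_eq_zero_of_row_eq_zero (i := i) (funext fun j => by fin_cases j <;> simp <;> omega))
  have h0 := row_ne_zero 0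
  have h1 := row_ne_zero 1
  rcases hA with rfl | rfl <;>
    simp only [entrySum, Fin.sum_univ_two, L₁_mul_zero, L₁_mul_one, R₁_mul_zero, R₁_mul_one,
      Pi.add_apply] <;> omega

def IsFactorization (M : Mat₂) (p : List Mat₂ × Mat₂) : Prop :=
  (∀ A ∈ p.1, IsGenerator A) ∧ IsTerminal p.2 ∧ M = p.1.prod * p.2

theorem isFactorization_nil_iff {M N : Mat₂} :
    IsFactorization M ([], N) ↔ IsTerminal M ∧ N = M := by
  simp only [IsFactorization, List.not_mem_nil, List.prod_nil, one_mul]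
  constructor
  · rintro ⟨-, hN, rfl⟩; exact ⟨hN, rfl⟩
  · rintro ⟨hM, rfl⟩; exact ⟨fun _ h => h.elim, hM, rfl⟩

theorem isFactorization_cons_iff {M A N : Mat₂} {l : List Mat₂} :
    IsFactorization M (A :: l, N) ↔
      IsGenerator A ∧ ∃ X, IsFactorization X (l, N) ∧ M = A * X := by
  simp only [IsFactorization, List.forall_mem_cons, List.prod_cons, Matrix.mul_assoc]
  constructor
  · rintro ⟨⟨hA, hl⟩, hN, rfl⟩
    exact ⟨hA, _, ⟨hl, hN, rfl⟩, rfl⟩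
  · rintro ⟨hA, X, ⟨hl, hN, rfl⟩, rfl⟩
    exact ⟨⟨hA, hl⟩, hN, rfl⟩

theorem exists_isFactorization (M : Mat₂) (hM : natDet M ≠ 0) : ∃ p, IsFactorization M p := by
  induction hs : entrySum M using Nat.strong_induction_on generalizing M with
  | _ s ih =>
    by_cases hterm : IsTerminal M
    · exact ⟨([], M), isFactorization_nil_iff.2 ⟨hterm, rfl⟩⟩
    obtain ⟨A, X, hA, rfl⟩ := exists_isGenerator_mul_eq_of_not_isTerminal hterm
    rw [hA.natDet_mul] at hM
    obtain ⟨⟨l, N⟩, hX⟩ := ih _ (hs ▸ hA.entrySum_lt_mul hM) X hM rfl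
    exact ⟨(A :: l, N), isFactorization_cons_iff.2 ⟨hA, X, hX, rfl⟩⟩

theorem IsFactorization.unique {M : Mat₂} (hM : natDet M ≠ 0) {p q : List Mat₂ × Mat₂}
    (hp : IsFactorization M p) (hq : IsFactorization M q) : p = q := by
  obtain ⟨l, N⟩ := p
  obtain ⟨l', N'⟩ := q
  induction l generalizing M l' with
  | nil =>
    obtain ⟨hterm, rfl⟩ := isFactorization_nil_iff.1 hp
    cases l' with
    | nil => rw [(isFactorization_nil_iff.1 hq).2]
    | cons B t =>
      obtain ⟨hB, _, -, rfl⟩ := isFactorization_cons_iff.1 hq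
      exact absurd hterm (hB.not_isTerminal_mul _)
  | cons A l ih =>
    obtain ⟨hA, X, hX, rfl⟩ := isFactorization_cons_iff.1 hp
    cases l' with
    | nil => exact absurd (isFactorization_nil_iff.1 hq).1 (hA.not_isTerminal_mul _)
    | cons B t =>
      obtain ⟨hB, Y, hY, hXY⟩ := isFactorization_cons_iff.1 hq
      obtain ⟨rfl, rfl⟩ := hA.eq_and_eq_of_mul_eq_mul hB hM hXY
      rw [hA.natDet_mul] at hM
      obtain ⟨rfl, rfl⟩ := Prod.mk.inj (ih hM hX t hY)
      rfl

end LRFactorization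

theorem stmt_11 (M : Matrix (Fin 2) (Fin 2) ℕ)
    (hdet : (M 0 0 : ℤ) * M 1 1 - M 0 1 * M 1 0 ≠ 0) :
    ∃! p : List (Matrix (Fin 2) (Fin 2) ℕ) × Matrix (Fin 2) (Fin 2) ℕ,
      (∀ A ∈ p.1, A = L₁ ∨ A = R₁) ∧
      ((p.2 0 0 < p.2 1 0 ∧ p.2 1 1 < p.2 0 1) ∨
        (p.2 1 0 < p.2 0 0 ∧ p.2 0 1 < p.2 1 1)) ∧
      M = p.1.prod * p.2 := by
  rw [← LRFactorization.natDet_fin_two] at hdet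
  simp only [← LRFactorization.isTerminal_iff]
  obtain ⟨p, hp⟩ := LRFactorization.exists_isFactorization M hdet
  exact ⟨p, hp, fun q hq => LRFactorization.IsFactorization.unique hdet hq hp⟩
end

section
/- Let u and v be positive integers and let z be a complex number with Re(z) > 0 and Im(z) > 0. Then z is a complex (u,v)-orphan — i.e., there is no complex number w with Re(w) > 0 and Im(w) > 0 such that z = w + v or z = w/(uw + 1) — if and only if Re(z) ≤ v and |2uz − 1| ≥ 1. -/
/-!
Since `(w / (u w + 1))⁻¹ = u + w⁻¹` and inversion maps the open first quadrant onto the open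
fourth quadrant, `z` is an image of the second child map exactly when `Re (z⁻¹) > u`, i.e. when
`u |z|² < Re z`; expanding `|2 u z - 1|² = 4 u (u |z|² - Re z) + 1` turns this into
`|2 u z - 1| < 1`. The first child map hits exactly the points with `Re z > v`.
-/
namespace Complex

theorem inv_re_pos_iff {w : ℂ} : 0 < w⁻¹.re ↔ 0 < w.re := by
  rcases eq_or_ne w 0 with rfl | hw
  · simp
  · rw [inv_re, div_pos_iff_of_pos_right (normSq_pos.mpr hw)]

theorem inv_im_neg_iff {w : ℂ} : w⁻¹.im < 0 ↔ 0 < w.im := by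
  rcases eq_or_ne w 0 with rfl | hw
  · simp
  · rw [inv_im, neg_div, neg_neg_iff_pos, div_pos_iff_of_pos_right (normSq_pos.mpr hw)]

theorem eq_div_mul_add_one_iff {w : ℂ} (u z : ℂ) (hw : w ≠ 0) :
    z = w / (u * w + 1) ↔ z⁻¹ = u + w⁻¹ := by
  rw [← inv_inj, inv_div, add_div, mul_div_cancel_right₀ _ hw, one_div]

theorem exists_eq_div_mul_add_one_iff (u : ℝ) {z : ℂ} (him : 0 < z.im) :
    (∃ w : ℂ, 0 < w.re ∧ 0 < w.im ∧ z = w / (u * w + 1)) ↔ u * normSq z < z.re := by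
  have hz : z ≠ 0 := fun h => by simp [h] at him
  have hnz := normSq_pos.mpr hz
  calc (∃ w : ℂ, 0 < w.re ∧ 0 < w.im ∧ z = w / (u * w + 1))
      ↔ ∃ w : ℂ, 0 < w.re ∧ 0 < w.im ∧ w⁻¹ = z⁻¹ - u := by
        refine exists_congr fun w => and_congr_right fun hre => and_congr_right fun hwim => ?_
        have hw : w ≠ 0 := fun h => by simp [h] at hwim
        rw [eq_div_mul_add_one_iff _ _ hw, eq_sub_iff_add_eq', eq_comm]
    _ ↔ 0 < (z⁻¹ - u).re ∧ (z⁻¹ - u).im < 0 := by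
        refine ⟨?_, fun h => ⟨(z⁻¹ - u)⁻¹, ?_⟩⟩
        · rintro ⟨w, hre, hwim, hw⟩
          rw [← hw]
          exact ⟨inv_re_pos_iff.mpr hre, inv_im_neg_iff.mpr hwim⟩
        · rw [← inv_re_pos_iff, ← inv_im_neg_iff, inv_inv]
          exact ⟨h.1, h.2, rfl⟩
    _ ↔ u * normSq z < z.re := by
        rw [sub_re, sub_im, ofReal_re, ofReal_im, sub_zero, inv_im_neg_iff, inv_re,
          sub_pos, lt_div_iff₀ hnz, mul_comm]
        exact and_iff_left him

theorem exists_eq_add_ofReal_iff (v : ℝ) {z : ℂ} (him : 0 < z.im) :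
    (∃ w : ℂ, 0 < w.re ∧ 0 < w.im ∧ z = w + v) ↔ v < z.re := by
  refine ⟨fun ⟨w, hre, _, hw⟩ => ?_,
    fun h => ⟨z - v, by simpa using h, by simpa using him, by ring⟩⟩
  rw [hw, add_re, ofReal_re]
  linarith

theorem one_le_norm_two_mul_mul_sub_one_iff {u : ℝ} (hu : 0 < u) (z : ℂ) :
    1 ≤ ‖2 * u * z - 1‖ ↔ z.re ≤ u * normSq z := by
  have key : normSq (2 * u * z - 1) = 4 * u * (u * normSq z - z.re) + 1 := by
    simp only [normSq_apply, sub_re, sub_im, mul_re, mul_im, ofReal_re, ofReal_im, one_re, one_im,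
      re_ofNat, im_ofNat]
    ring
  rw [← one_le_sq_iff₀ (norm_nonneg _), Complex.sq_norm, key, le_add_iff_nonneg_left,
    mul_nonneg_iff_of_pos_left (by positivity), sub_nonneg]

end Complex

theorem stmt_12_general (u v : ℕ) (hu : 0 < u) (z : ℂ)
    (him : 0 < z.im) :
    (¬∃ w : ℂ, 0 < w.re ∧ 0 < w.im ∧
        (z = w + v ∨ z = w / (u * w + 1))) ↔
      (z.re ≤ v ∧ 1 ≤ ‖2 * u * z - 1‖) := by
  have htrans := Complex.exists_eq_add_ofReal_iff v him
  have hmob := Complex.exists_eq_div_mul_add_one_iff u him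
  have hdisk := Complex.one_le_norm_two_mul_mul_sub_one_iff (u := u) (Nat.cast_pos.mpr hu) z
  push_cast at htrans hmob hdisk
  simp only [and_or_left, exists_or, not_or, htrans, hmob, hdisk, not_lt]

theorem stmt_12 (u v : ℕ) (hu : 0 < u) (hv : 0 < v) (z : ℂ)
    (hre : 0 < z.re) (him : 0 < z.im) :
    (¬∃ w : ℂ, 0 < w.re ∧ 0 < w.im ∧
        (z = w + v ∨ z = w / (u * w + 1))) ↔
      (z.re ≤ v ∧ 1 ≤ ‖2 * u * z - 1‖) :=
  stmt_12_general u v hu z him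
end

section
/- Let u be a positive integer, let y₀ be a real number with 0 < y₀ ≤ 1/(2u), and let z be a complex number with Re(z) > 0, Im(z) > 0, |2uz − 1| < 1, and Im(z) ≥ y₀. Then Im(z/(1 − uz)) − Im(z) ≥ ε_u(y₀), and ε_u(y₀) > 0, where ε_u(y) = 2y/(1 + √(1 − 4u²y²)) − y. -/
/-! With `w = u z` and `s = √(1 - 4u²y₀²)`, one has `Im (z / (1 - w)) = Im z / |1 - w|²`, and the disk
condition `|2w - 1| < 1` reads `|w|² < Re w`. Together with `(Im w)² ≥ u²y₀²` this forces
`Re w (1 - Re w) > u²y₀²`, so `Re w` lies beyond the smaller root `(1 - s)/2` of `t (1 - t) = u²y₀²`,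
whence `|1 - w|² < 1 - Re w < (1 + s)/2`. Then `Im z (1/|1 - w|² - 1) ≥ y₀ (2/(1 + s) - 1) = ε_u(y₀)`. -/

open Complex

theorem Complex.im_div_one_sub_ofReal_mul (a : ℝ) (z : ℂ) :
    (z / (1 - a * z)).im = z.im / normSq (1 - a * z) := by
  rw [div_im]
  simp only [sub_re, sub_im, one_re, one_im, re_ofReal_mul, im_ofReal_mul]
  ring

theorem Complex.normSq_lt_re_of_norm_two_mul_sub_one_lt_one {w : ℂ} (hw : ‖2 * w - 1‖ < 1) :
    normSq w < w.re := by
  have h : normSq (2 * w - 1) < 1 := by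
    rw [normSq_eq_norm_sq]
    nlinarith [norm_nonneg (2 * w - 1)]
  simp only [normSq_apply, sub_re, sub_im, mul_re, mul_im, one_re, one_im] at h ⊢
  norm_num at h
  nlinarith

theorem one_sub_sqrt_one_sub_four_mul_div_two_lt {q t : ℝ} (h : q < t - t ^ 2) :
    (1 - √(1 - 4 * q)) / 2 < t := by
  have h' : |2 * t - 1| < √(1 - 4 * q) :=
    (Real.lt_sqrt (abs_nonneg _)).2 (by rw [sq_abs]; linarith)
  linarith [neg_abs_le (2 * t - 1)]

theorem Complex.normSq_one_sub_lt {w : ℂ} {q : ℝ} (hw : ‖2 * w - 1‖ < 1) (hq : q ≤ w.im ^ 2) :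
    normSq (1 - w) < (1 + √(1 - 4 * q)) / 2 := by
  have hdisk := normSq_lt_re_of_norm_two_mul_sub_one_lt_one hw
  have hexpand : normSq (1 - w) = 1 - 2 * w.re + normSq w := by
    simp only [normSq_apply, sub_re, sub_im, one_re, one_im]
    ring
  have hroot : (1 - √(1 - 4 * q)) / 2 < w.re :=
    one_sub_sqrt_one_sub_four_mul_div_two_lt (by rw [normSq_apply] at hdisk; nlinarith)
  linarith

theorem two_mul_div_one_add_sub_le {y₀ y s D : ℝ} (hy₀ : 0 ≤ y₀) (hy : y₀ ≤ y)
    (hs : s ≤ 1) (hD : 0 < D) (hDs : D ≤ (1 + s) / 2) :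
    2 * y₀ / (1 + s) - y₀ ≤ y / D - y := by
  have hnonneg : 0 ≤ 2 / (1 + s) - 1 := by
    rw [sub_nonneg, le_div_iff₀ (by linarith)]
    linarith
  have hinv : 2 / (1 + s) ≤ 1 / D := by
    rw [div_le_div_iff₀ (by linarith) hD]
    linarith
  calc 2 * y₀ / (1 + s) - y₀ = y₀ * (2 / (1 + s) - 1) := by ring
    _ ≤ y * (1 / D - 1) := mul_le_mul hy (by linarith) hnonneg (hy₀.trans hy)
    _ = y / D - y := by ring

theorem stmt_13_general (u : ℕ) (hu : 0 < u) (y₀ : ℝ) (hy₀ : 0 < y₀) (z : ℂ)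
    (hz : ‖2 * u * z - 1‖ < 1) (himy : y₀ ≤ z.im) :
    2 * y₀ / (1 + Real.sqrt (1 - 4 * u ^ 2 * y₀ ^ 2)) - y₀ ≤
      (z / (1 - u * z)).im - z.im ∧
    0 < 2 * y₀ / (1 + Real.sqrt (1 - 4 * u ^ 2 * y₀ ^ 2)) - y₀ := by
  set s := √(1 - 4 * u ^ 2 * y₀ ^ 2)
  have hs1 : s < 1 := by
    have hu' : (0 : ℝ) < u := by exact_mod_cast hu
    exact (Real.sqrt_lt' one_pos).2 (by nlinarith [mul_pos hu' hy₀])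
  have hD : normSq (1 - u * z) < (1 + s) / 2 := by
    have hq : (u : ℝ) ^ 2 * y₀ ^ 2 ≤ ((u : ℂ) * z).im ^ 2 := by
      rw [← ofReal_natCast, im_ofReal_mul, mul_pow]
      gcongr
    simpa only [s, mul_assoc] using normSq_one_sub_lt (by rwa [mul_assoc] at hz) hq
  have hD0 : 0 < normSq (1 - u * z) := normSq_pos.2 fun h => by
    rw [sub_eq_zero] at h
    rw [mul_assoc, ← h] at hz
    norm_num at hz
  have him_eq := im_div_one_sub_ofReal_mul u z
  push_cast at him_eq
  refine ⟨?_, ?_⟩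
  · rw [him_eq]
    exact two_mul_div_one_add_sub_le hy₀.le himy hs1.le hD0 hD.le
  · have : 1 < 2 / (1 + s) := by
      rw [lt_div_iff₀ (by positivity)]
      linarith
    calc 0 < y₀ * (2 / (1 + s) - 1) := mul_pos hy₀ (by linarith)
      _ = 2 * y₀ / (1 + s) - y₀ := by ring

theorem stmt_13 (u : ℕ) (hu : 0 < u) (y₀ : ℝ) (hy₀ : 0 < y₀)
    (hy₀' : y₀ ≤ 1 / (2 * u)) (z : ℂ) (hre : 0 < z.re) (him : 0 < z.im)
    (hz : ‖2 * u * z - 1‖ < 1) (himy : y₀ ≤ z.im) :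
    2 * y₀ / (1 + Real.sqrt (1 - 4 * u ^ 2 * y₀ ^ 2)) - y₀ ≤
      (z / (1 - u * z)).im - z.im ∧
    0 < 2 * y₀ / (1 + Real.sqrt (1 - 4 * u ^ 2 * y₀ ^ 2)) - y₀ :=
  stmt_13_general u hu y₀ hy₀ z hz himy
end

section
/- Let u and v be positive integers. Then every complex number z with Re(z) > 0 and Im(z) > 0 is a descendant of a complex (u,v)-orphan: there exists a complex number w with Re(w) > 0 and Im(w) > 0 that is a complex (u,v)-orphan and such that z is obtained from w by finitely many (possibly zero) applications of the maps t ↦ t + v and t ↦ t/(ut + 1); equivalently, the pair (w, z) lies in the reflexive–transitive closure of the relation r, where r(s, t) holds if Re(s) > 0, Im(s) > 0, and t = s + v or t = s/(us + 1). -/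
noncomputable def stmtDelta (u v : ℕ) (z : ℂ) : ℝ :=
  min ((v:ℝ) * z.im / (z.re^2 + z.im^2)) ((u:ℝ) * z.im)

lemma stmtDelta_pos (u v : ℕ) (hu : 0 < u) (hv : 0 < v) (z : ℂ)
    (h1 : 0 < z.re) (h2 : 0 < z.im) : 0 < stmtDelta u v z := by
  have hv' : (0:ℝ) < v := by exact_mod_cast hv
  have hu' : (0:ℝ) < u := by exact_mod_cast hu
  unfold stmtDelta
  apply lt_min <;> positivity

lemma stmt_key (u v : ℕ) (hu : 0 < u) (hv : 0 < v) (p z : ℂ)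
    (hx : 0 < p.re) (hy : 0 < p.im)
    (h : z = p + (v:ℂ) ∨ z = p / ((u:ℂ) * p + 1)) :
    p.re / p.im + stmtDelta u v z ≤ z.re / z.im ∧ stmtDelta u v z ≤ stmtDelta u v p := by
  have hv' : (0:ℝ) < v := by exact_mod_cast hv
  have hu' : (0:ℝ) < u := by exact_mod_cast hu
  rcases h with h | h
  · have ha : z.re = p.re + v := by rw [h]; simp
    have hb : z.im = p.im := by rw [h]; simp
    constructor
    · have h1 : stmtDelta u v z ≤ (v:ℝ) * z.im / (z.re^2 + z.im^2) := min_le_left _ _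
      have h2 : (v:ℝ) * z.im / (z.re^2 + z.im^2) ≤ v / p.im := by
        rw [ha, hb, div_le_div_iff₀ (by positivity) hy]
        nlinarith [sq_nonneg (p.re + v), hy]
      have h3 : z.re / z.im = p.re / p.im + v / p.im := by
        rw [ha, hb]; ring
      linarith
    · apply min_le_min
      · rw [ha, hb]
        apply div_le_div_of_nonneg_left (by positivity) (by positivity)
        nlinarith
      · rw [hb]
  · -- z = p / (u p + 1)
    set x := p.re with hxdef
    set y := p.im with hydef
    have hne : ((u:ℂ) * p + 1) ≠ 0 := by
      intro h0
      have : ((u:ℂ) * p + 1).re = 0 := by rw [h0]; simp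
      simp [Complex.add_re, Complex.mul_re, Complex.natCast_re, Complex.natCast_im] at this
      nlinarith
    have he : z * ((u:ℂ) * p + 1) = p := by rw [h, div_mul_cancel₀ _ hne]
    have E1 := congrArg Complex.re he
    have E2 := congrArg Complex.im he
    simp [Complex.mul_re, Complex.mul_im, Complex.add_re, Complex.add_im,
      Complex.natCast_re, Complex.natCast_im] at E1 E2
    set D : ℝ := ((u:ℝ)*x+1)^2 + ((u:ℝ)*y)^2 with hDdef
    have hD1 : 1 ≤ D := by
      have : 0 ≤ (u:ℝ)*x := by positivity
      nlinarith [sq_nonneg ((u:ℝ)*y)]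
    have hDpos : 0 < D := by linarith
    have haD : z.re * D = (u:ℝ)*(x^2+y^2) + x := by
      rw [hDdef]; linear_combination ((u:ℝ)*x+1) * E1 + ((u:ℝ)*y) * E2
    have hbD : z.im * D = y := by
      rw [hDdef]; linear_combination ((u:ℝ)*x+1) * E2 - ((u:ℝ)*y) * E1
    have hb_pos : 0 < z.im := by nlinarith
    have hbley : z.im ≤ y := by nlinarith
    have hnorm2 : (z.re^2 + z.im^2) * D^2 = (x^2+y^2) * D := by
      rw [hDdef]
      linear_combination (z.re*D + ((u:ℝ)*(x^2+y^2) + x)) * haD + (z.im*D + y) * hbD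
    have hnorm : (z.re^2 + z.im^2) * D = x^2 + y^2 := by
      exact mul_right_cancel₀ (ne_of_gt hDpos) (by linear_combination hnorm2)
    have hay : z.re * y = z.im * ((u:ℝ)*(x^2+y^2) + x) := by
      linear_combination z.im * haD - z.re * hbD
    constructor
    · have h1 : stmtDelta u v z ≤ (u:ℝ) * z.im := min_le_right _ _
      have h2 : x / y + (u:ℝ) * z.im ≤ z.re / z.im := by
        rw [div_add' _ _ _ (ne_of_gt hy), div_le_div_iff₀ hy hb_pos]
        have hkey : 0 ≤ (u:ℝ) * z.im * (x^2 + y*(y - z.im)) := by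
          have h5 : 0 ≤ y * (y - z.im) := mul_nonneg hy.le (by linarith)
          have h6 : 0 ≤ x^2 + y*(y-z.im) := by positivity
          positivity
        nlinarith [hay]
      linarith
    · apply min_le_min
      · have heq : (v:ℝ) * z.im / (z.re^2 + z.im^2) = (v:ℝ) * y / (x^2 + y^2) := by
          rw [div_eq_div_iff (by positivity) (by positivity)]
          linear_combination (v:ℝ) * (z.re^2+z.im^2) * hbD - (v:ℝ) * z.im * hnorm
        rw [heq]
      · exact mul_le_mul_of_nonneg_left hbley hu'.le

noncomputable def stmtM (u v : ℕ) (z : ℂ) : ℕ :=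
  ⌈(z.re / z.im) / stmtDelta u v z⌉₊

lemma stmtM_lt (u v : ℕ) (hu : 0 < u) (hv : 0 < v) (p z : ℂ)
    (hx : 0 < p.re) (hy : 0 < p.im) (hzr : 0 < z.re) (hzi : 0 < z.im)
    (h : z = p + (v:ℂ) ∨ z = p / ((u:ℂ) * p + 1)) :
    stmtM u v p < stmtM u v z := by
  obtain ⟨k1, k2⟩ := stmt_key u v hu hv p z hx hy h
  have dz := stmtDelta_pos u v hu hv z hzr hzi
  have dp := stmtDelta_pos u v hu hv p hx hy
  have tp_nonneg : 0 ≤ p.re / p.im := by positivity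
  have h1 : p.re/p.im / stmtDelta u v p ≤ p.re/p.im / stmtDelta u v z :=
    div_le_div_of_nonneg_left tp_nonneg dz k2
  have h2 : p.re/p.im / stmtDelta u v z + 1 ≤ (z.re/z.im) / stmtDelta u v z := by
    rw [div_add' _ _ _ (ne_of_gt dz)]
    gcongr
    linarith [k1]
  have h3 : p.re/p.im / stmtDelta u v p + 1 ≤ (z.re/z.im) / stmtDelta u v z := by linarith
  have h4 : 0 ≤ p.re/p.im / stmtDelta u v p := by positivity
  calc stmtM u v p < stmtM u v p + 1 := Nat.lt_succ_self _
    _ = ⌈p.re/p.im / stmtDelta u v p + 1⌉₊ := (Nat.ceil_add_one h4).symm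
    _ ≤ stmtM u v z := Nat.ceil_le_ceil h3

theorem stmt_15 (u v : ℕ) (hu : 0 < u) (hv : 0 < v) (z : ℂ)
    (hre : 0 < z.re) (him : 0 < z.im) :
    ∃ w : ℂ, 0 < w.re ∧ 0 < w.im ∧
      (¬∃ p : ℂ, 0 < p.re ∧ 0 < p.im ∧ (w = p + v ∨ w = p / (u * p + 1))) ∧
      Relation.ReflTransGen
        (fun s t : ℂ => 0 < s.re ∧ 0 < s.im ∧ (t = s + v ∨ t = s / (u * s + 1)))
        w z := by
  suffices H : ∀ n : ℕ, ∀ z : ℂ, 0 < z.re → 0 < z.im → stmtM u v z ≤ n →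
      ∃ w : ℂ, 0 < w.re ∧ 0 < w.im ∧
      (¬∃ p : ℂ, 0 < p.re ∧ 0 < p.im ∧ (w = p + v ∨ w = p / (u * p + 1))) ∧
      Relation.ReflTransGen
        (fun s t : ℂ => 0 < s.re ∧ 0 < s.im ∧ (t = s + v ∨ t = s / (u * s + 1)))
        w z by
    exact H (stmtM u v z) z hre him le_rfl
  intro n
  induction n using Nat.strong_induction_on with
  | _ n ih =>
    intro z h1 h2 hm
    by_cases hp : ∃ p : ℂ, 0 < p.re ∧ 0 < p.im ∧ (z = p + v ∨ z = p / (u * p + 1))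
    · obtain ⟨p, hpx, hpy, hpz⟩ := hp
      have hlt := stmtM_lt u v hu hv p z hpx hpy h1 h2 hpz
      obtain ⟨w, hw1, hw2, hw3, hw4⟩ :=
        ih (stmtM u v p) (lt_of_lt_of_le hlt hm) p hpx hpy le_rfl
      exact ⟨w, hw1, hw2, hw3, hw4.tail ⟨hpx, hpy, hpz⟩⟩
    · exact ⟨z, h1, h2, hp, Relation.ReflTransGen.refl⟩
end
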